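/- The space 𝕄(3) ⊆ ℂ³ is homeomorphic to (𝔹² × S¹) ∖ ({0} × S¹), where 𝔹² ⊆ ℝ² is the open unit disc and S¹ ⊆ ℝ² is the unit circle. -/

import Mathlib

open Complex

noncomputable section

/-- The set of `3`-segments in `ℂ³`. -/
def Lset3 : Set (Fin 3 → ℂ) :=
  {Z | (¬ ∃ b : ℂ, ∀ j, Z j = b) ∧ ∃ (a b : ℂ) (X : Fin 3 → ℝ), ∀ j, Z j = a * (X j) + b}

/-- `𝕄(3)`: the `3`-segments whose first vertex is `0`. -/
def Mset3 : Set (Fin 3 → ℂ) :=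
  {Z | Z ∈ Lset3 ∧ Z 0 = 0}

/-- `(𝔹² × S¹) ∖ ({0} × S¹)` inside `ℝ² × ℝ²` (Euclidean plane). -/
def solidTorusMinusCore :
    Set (EuclideanSpace ℝ (Fin 2) × EuclideanSpace ℝ (Fin 2)) :=
  (Metric.ball (0 : EuclideanSpace ℝ (Fin 2)) 1 ×ˢ
      Metric.sphere (0 : EuclideanSpace ℝ (Fin 2)) 1) \
    ({(0 : EuclideanSpace ℝ (Fin 2))} ×ˢ Metric.sphere (0 : EuclideanSpace ℝ (Fin 2)) 1)

lemma mem_Mset3_iff (Z : Fin 3 → ℂ) :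
    Z ∈ Mset3 ↔ Z 0 = 0 ∧ (Z 1 * (starRingEnd ℂ) (Z 2)).im = 0 ∧ ¬(Z 1 = 0 ∧ Z 2 = 0) := by
  constructor
  · rintro ⟨⟨hnc, a, b, X, hX⟩, h0⟩
    have hb : b = -(a * X 0) := by
      have := hX 0; rw [h0] at this; linear_combination -this
    refine ⟨h0, ?_, ?_⟩
    · have h1 : Z 1 = a * ((X 1 : ℂ) - X 0) := by rw [hX 1, hb]; ring
      have h2 : Z 2 = a * ((X 2 : ℂ) - X 0) := by rw [hX 2, hb]; ring
      rw [h1, h2]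
      simp only [map_mul, map_sub, Complex.conj_ofReal]
      have e : a * ((X 1 : ℂ) - X 0) * ((starRingEnd ℂ) a * ((X 2 : ℂ) - X 0))
          = (a * (starRingEnd ℂ) a) * (((X 1 : ℂ) - X 0) * ((X 2 : ℂ) - X 0)) := by ring
      rw [e, Complex.mul_conj]
      have e2 : (((X 1 : ℂ) - X 0) * ((X 2 : ℂ) - X 0)) = ((X 1 - X 0) * (X 2 - X 0) : ℝ) := by
        push_cast; ring
      rw [e2]
      simp
    · rintro ⟨e1, e2⟩
      exact hnc ⟨0, by intro j; fin_cases j <;> simpa⟩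
  · rintro ⟨h0, him, hne⟩
    refine ⟨⟨?_, ?_⟩, h0⟩
    · rintro ⟨c, hc⟩
      have hc0 : c = 0 := (hc 0).symm.trans h0
      exact hne ⟨(hc 1).trans hc0, (hc 2).trans hc0⟩
    · by_cases h2 : Z 2 = 0
      · exact ⟨Z 1, 0, ![0, 1, 0], by intro j; fin_cases j <;> simp [h0, h2]⟩
      · have hre : Z 1 * (starRingEnd ℂ) (Z 2) = ((Z 1 * (starRingEnd ℂ) (Z 2)).re : ℂ) := by
          apply Complex.ext <;> simp [him]
        refine ⟨Z 2, 0, ![0, (Z 1 * (starRingEnd ℂ) (Z 2)).re / Complex.normSq (Z 2), 1], ?_⟩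
        intro j
        have hn : (Complex.normSq (Z 2) : ℂ) ≠ 0 := by simpa using h2
        fin_cases j
        · simpa using h0
        · show Z 1 = Z 2 * (((Z 1 * (starRingEnd ℂ) (Z 2)).re / Complex.normSq (Z 2) : ℝ) : ℂ) + 0
          push_cast
          rw [← hre, ← Complex.mul_conj]
          have hc2 : (starRingEnd ℂ) (Z 2) ≠ 0 := by simpa using h2
          field_simp
          ring
        · simp

def Mprime : Set (ℂ × ℂ) := {w | (w.1 * (starRingEnd ℂ) w.2).im = 0 ∧ w ≠ 0}

lemma ne_zero_prod_iff (w : ℂ × ℂ) : w ≠ 0 ↔ ¬(w.1 = 0 ∧ w.2 = 0) := by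
  simp [ne_eq, Prod.ext_iff]

noncomputable def homeo1 : ↥Mset3 ≃ₜ ↥Mprime where
  toFun Z := ⟨(Z.1 1, Z.1 2), by
    obtain ⟨h0, him, hne⟩ := (mem_Mset3_iff Z.1).mp Z.2
    refine ⟨him, ?_⟩
    simp only [ne_eq, Prod.mk_eq_zero, not_and_or] at *
    tauto⟩
  invFun w := ⟨![0, w.1.1, w.1.2], by
    obtain ⟨him, hne⟩ := w.2
    refine (mem_Mset3_iff _).mpr ⟨rfl, by simpa using him, ?_⟩
    simp only [ne_eq, Prod.ext_iff] at hne
    simpa using fun h1 h2 => hne ⟨h1, h2⟩⟩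
  left_inv Z := by
    ext j
    obtain ⟨h0, _, _⟩ := (mem_Mset3_iff Z.1).mp Z.2
    fin_cases j <;> simp [h0.symm]
  right_inv w := by
    ext <;> simp
  continuous_toFun := by
    apply Continuous.subtype_mk
    exact ((continuous_apply (1 : Fin 3)).comp continuous_subtype_val).prodMk
      ((continuous_apply (2 : Fin 3)).comp continuous_subtype_val)
  continuous_invFun := by
    apply Continuous.subtype_mk
    apply continuous_pi
    intro j
    fin_cases j
    · simpa using continuous_const
    · simpa using continuous_subtype_val.fst
    · simpa using continuous_subtype_val.snd

def Tset : Set (ℂ × ℂ) := {p | p.1 ≠ 0 ∧ ‖p.2‖ = 1}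

lemma normSq_key (w₁ w₂ : ℂ) :
    Complex.normSq (w₁ + I * w₂) - Complex.normSq (w₁ - I * w₂)
      = 4 * (w₁ * (starRingEnd ℂ) w₂).im := by
  simp only [Complex.normSq_apply, Complex.add_re, Complex.add_im, Complex.sub_re,
    Complex.sub_im, Complex.mul_re, Complex.mul_im, Complex.I_re, Complex.I_im,
    Complex.conj_re, Complex.conj_im]
  ring

lemma Mprime_aux {w : ℂ × ℂ} (hw : w ∈ Mprime) :
    w.1 + I * w.2 ≠ 0 ∧ w.1 - I * w.2 ≠ 0 ∧
      ‖w.1 + I * w.2‖ = ‖w.1 - I * w.2‖ := by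
  obtain ⟨him, hne⟩ := hw
  have hn : Complex.normSq (w.1 + I * w.2) = Complex.normSq (w.1 - I * w.2) := by
    have := normSq_key w.1 w.2
    rw [him] at this
    linarith
  have habs : ‖w.1 + I * w.2‖ = ‖w.1 - I * w.2‖ := by
    rw [Complex.norm_def, Complex.norm_def, hn]
  have hplus : w.1 + I * w.2 ≠ 0 := by
    intro h
    have h2 : w.1 - I * w.2 = 0 := by
      apply Complex.normSq_eq_zero.mp
      rw [← hn, h]
      simp
    apply hne
    have e1 : w.1 = 0 := by linear_combination h / 2 + h2 / 2
    have hI : I * w.2 = 0 := by linear_combination h / 2 - h2 / 2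
    have e2 : w.2 = 0 := by simpa [Complex.I_ne_zero] using hI
    exact Prod.ext e1 e2
  refine ⟨hplus, ?_, habs⟩
  intro h
  rw [h] at habs
  simp only [norm_zero] at habs
  exact hplus (by simpa using norm_eq_zero.mp habs)

lemma Tset_aux {p : ℂ × ℂ} (hp : p ∈ Tset) : p.2 ≠ 0 ∧ (starRingEnd ℂ) p.2 = p.2⁻¹ := by
  obtain ⟨hb, hv⟩ := hp
  have h2 : p.2 ≠ 0 := by
    intro h
    rw [h] at hv
    simp at hv
  exact ⟨h2, (Complex.inv_eq_conj hv).symm⟩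

lemma im_aux (b v : ℂ) (hvne : v ≠ 0) (hcv : (starRingEnd ℂ) v = v⁻¹) :
    ((b + b / v) / 2 * (starRingEnd ℂ) ((b - b / v) / (2 * I))).im = 0 := by
  have he : (b + b / v) / 2 * (starRingEnd ℂ) ((b - b / v) / (2 * I))
      = (b * (starRingEnd ℂ) b) * (v - v⁻¹) / (4 * I) := by
    simp only [map_div₀, map_sub, map_add, map_mul, Complex.conj_I, map_ofNat, hcv, inv_inv]
    field_simp
    ring
  rw [he, Complex.mul_conj, ← hcv, Complex.sub_conj]
  have : (Complex.normSq b : ℂ) * (((2 * v.im : ℝ) : ℂ) * I) / (4 * I)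
      = ((Complex.normSq b * v.im / 2 : ℝ) : ℂ) := by
    push_cast
    field_simp [Complex.I_ne_zero]
    ring
  rw [this, Complex.ofReal_im]

noncomputable def homeo2 : ↥Mprime ≃ₜ ↥Tset where
  toFun w := ⟨(w.1.1 + I * w.1.2, (w.1.1 + I * w.1.2) / (w.1.1 - I * w.1.2)), by
    obtain ⟨hplus, hminus, habs⟩ := Mprime_aux w.2
    refine ⟨hplus, ?_⟩
    rw [norm_div, habs]
    exact div_self (norm_ne_zero_iff.mpr hminus)⟩
  invFun p := ⟨((p.1.1 + p.1.1 / p.1.2) / 2, (p.1.1 - p.1.1 / p.1.2) / (2 * I)), by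
    obtain ⟨hb, hv⟩ := p.2
    obtain ⟨h2, hconj⟩ := Tset_aux p.2
    constructor
    · exact im_aux p.1.1 p.1.2 h2 hconj
    · intro h
      apply hb
      have h1 : (p.1.1 + p.1.1 / p.1.2) / 2 = 0 := (Prod.ext_iff.mp h).1
      have h2' : (p.1.1 - p.1.1 / p.1.2) / (2 * I) = 0 := (Prod.ext_iff.mp h).2
      have e1 : p.1.1 + p.1.1 / p.1.2 = 0 :=
        (div_eq_zero_iff.mp h1).resolve_right two_ne_zero
      have e2 : p.1.1 - p.1.1 / p.1.2 = 0 :=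
        (div_eq_zero_iff.mp h2').resolve_right (mul_ne_zero two_ne_zero Complex.I_ne_zero)
      linear_combination e1 / 2 + e2 / 2⟩
  left_inv w := by
    obtain ⟨hplus, hminus, habs⟩ := Mprime_aux w.2
    apply Subtype.ext
    apply Prod.ext
    · show (_ + _ / _) / 2 = w.1.1
      field_simp [hplus]
      ring
    · show (_ - _ / _) / (2 * I) = w.1.2
      field_simp [hplus, Complex.I_ne_zero]
      ring
  right_inv p := by
    obtain ⟨hb, hv⟩ := p.2
    obtain ⟨h2, hconj⟩ := Tset_aux p.2
    have key1 : (p.1.1 + p.1.1 / p.1.2) / 2 + I * ((p.1.1 - p.1.1 / p.1.2) / (2 * I)) = p.1.1 := by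
      field_simp [h2, Complex.I_ne_zero]
      ring
    have key2 : (p.1.1 + p.1.1 / p.1.2) / 2 - I * ((p.1.1 - p.1.1 / p.1.2) / (2 * I))
        = p.1.1 / p.1.2 := by
      field_simp [h2, Complex.I_ne_zero]
      ring
    apply Subtype.ext
    apply Prod.ext
    · exact key1
    · show _ / _ = p.1.2
      rw [key1, key2, div_div_eq_mul_div, mul_comm, mul_div_assoc, div_self hb, mul_one]
  continuous_toFun := by
    apply Continuous.subtype_mk
    have hc1 : Continuous fun w : ↥Mprime => w.1.1 + I * w.1.2 :=
      continuous_subtype_val.fst.add (continuous_const.mul continuous_subtype_val.snd)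
    have hc2 : Continuous fun w : ↥Mprime => w.1.1 - I * w.1.2 :=
      continuous_subtype_val.fst.sub (continuous_const.mul continuous_subtype_val.snd)
    exact hc1.prodMk (hc1.div hc2 fun w => (Mprime_aux w.2).2.1)
  continuous_invFun := by
    apply Continuous.subtype_mk
    have hv : ∀ p : ↥Tset, p.1.2 ≠ 0 := fun p => (Tset_aux p.2).1
    have hc0 : Continuous fun p : ↥Tset => p.1.1 / p.1.2 :=
      continuous_subtype_val.fst.div continuous_subtype_val.snd hv
    refine Continuous.prodMk ?_ ?_
    · exact (continuous_subtype_val.fst.add hc0).div continuous_const (fun _ => two_ne_zero)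
    · exact (continuous_subtype_val.fst.sub hc0).div continuous_const
        (fun _ => mul_ne_zero two_ne_zero Complex.I_ne_zero)

def Sset : Set (ℂ × ℂ) :=
  (Metric.ball (0 : ℂ) 1 ×ˢ Metric.sphere (0 : ℂ) 1) \
    ({(0 : ℂ)} ×ˢ Metric.sphere (0 : ℂ) 1)

lemma mem_Sset_iff (p : ℂ × ℂ) : p ∈ Sset ↔ ‖p.1‖ < 1 ∧ ‖p.2‖ = 1 ∧ p.1 ≠ 0 := by
  simp only [Sset, Set.mem_diff, Set.mem_prod, Metric.mem_ball, Metric.mem_sphere,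
    dist_zero_right, Set.mem_singleton_iff, not_and]
  constructor
  · rintro ⟨⟨h1, h2⟩, h3⟩
    exact ⟨h1, h2, fun h0 => h3 h0 h2⟩
  · rintro ⟨h1, h2, h3⟩
    exact ⟨⟨h1, h2⟩, fun h0 _ => h3 h0⟩

lemma mem_STMC_iff (p : EuclideanSpace ℝ (Fin 2) × EuclideanSpace ℝ (Fin 2)) :
    p ∈ solidTorusMinusCore ↔ ‖p.1‖ < 1 ∧ ‖p.2‖ = 1 ∧ p.1 ≠ 0 := by
  simp only [solidTorusMinusCore, Set.mem_diff, Set.mem_prod, Metric.mem_ball, Metric.mem_sphere,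
    dist_zero_right, Set.mem_singleton_iff, not_and]
  constructor
  · rintro ⟨⟨h1, h2⟩, h3⟩
    exact ⟨h1, h2, fun h0 => h3 h0 h2⟩
  · rintro ⟨h1, h2, h3⟩
    exact ⟨⟨h1, h2⟩, fun h0 _ => h3 h0⟩

lemma norm_r (b : ℂ) : ‖b / ((1 + ‖b‖ : ℝ) : ℂ)‖ = ‖b‖ / (1 + ‖b‖) := by
  rw [norm_div, Complex.norm_real, Real.norm_eq_abs, abs_of_pos (by positivity)]

lemma den_ne (b : ℂ) : ((1 + ‖b‖ : ℝ) : ℂ) ≠ 0 :=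
  Complex.ofReal_ne_zero.mpr (by positivity)

noncomputable def homeo3 : ↥Tset ≃ₜ ↥Sset where
  toFun p := ⟨(p.1.1 / ((1 + ‖p.1.1‖ : ℝ) : ℂ), p.1.2), by
    obtain ⟨hb, hv⟩ := p.2
    refine (mem_Sset_iff _).mpr ⟨?_, by simpa using hv,
      div_ne_zero hb (den_ne _)⟩
    rw [norm_r]
    rw [div_lt_one (by positivity)]
    linarith [norm_nonneg p.1.1]⟩
  invFun p := ⟨(p.1.1 / ((1 - ‖p.1.1‖ : ℝ) : ℂ), p.1.2), by
    obtain ⟨h1, h2, h3⟩ := (mem_Sset_iff _).mp p.2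
    have hden : ((1 - ‖p.1.1‖ : ℝ) : ℂ) ≠ 0 :=
      Complex.ofReal_ne_zero.mpr (by linarith)
    exact ⟨div_ne_zero h3 hden, by simpa using h2⟩⟩
  left_inv p := by
    obtain ⟨hb, hv⟩ := p.2
    apply Subtype.ext
    apply Prod.ext
    · show (p.1.1 / _) / _ = p.1.1
      rw [norm_r]
      have ht : (0:ℝ) < 1 + ‖p.1.1‖ := by positivity
      have h1 : (1 : ℝ) - ‖p.1.1‖ / (1 + ‖p.1.1‖) = 1 / (1 + ‖p.1.1‖) := by
        field_simp
        ring
      rw [h1]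
      rw [div_div]
      rw [show ((1 + ‖p.1.1‖ : ℝ) : ℂ) * ((1 / (1 + ‖p.1.1‖) : ℝ) : ℂ)
          = (((1 + ‖p.1.1‖) * (1 / (1 + ‖p.1.1‖)) : ℝ) : ℂ) by push_cast; ring]
      rw [mul_one_div, div_self (ne_of_gt ht)]
      simp
    · rfl
  right_inv p := by
    obtain ⟨h1, h2, h3⟩ := (mem_Sset_iff _).mp p.2
    have ht : (0:ℝ) < 1 - ‖p.1.1‖ := by linarith
    apply Subtype.ext
    apply Prod.ext
    · show (p.1.1 / _) / _ = p.1.1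
      have hns : ‖p.1.1 / ((1 - ‖p.1.1‖ : ℝ) : ℂ)‖ = ‖p.1.1‖ / (1 - ‖p.1.1‖) := by
        rw [norm_div, Complex.norm_real, Real.norm_eq_abs, abs_of_pos ht]
      rw [hns]
      have hh : (1 : ℝ) + ‖p.1.1‖ / (1 - ‖p.1.1‖) = 1 / (1 - ‖p.1.1‖) := by
        have hne : (1 : ℝ) - ‖p.1.1‖ ≠ 0 := ne_of_gt ht
        rw [eq_div_iff hne, add_mul, div_mul_cancel₀ _ hne]
        ring
      rw [hh, div_div]
      rw [show ((1 - ‖p.1.1‖ : ℝ) : ℂ) * ((1 / (1 - ‖p.1.1‖) : ℝ) : ℂ)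
          = (((1 - ‖p.1.1‖) * (1 / (1 - ‖p.1.1‖)) : ℝ) : ℂ) by push_cast; ring]
      rw [mul_one_div, div_self (ne_of_gt ht)]
      simp
    · rfl
  continuous_toFun := by
    apply Continuous.subtype_mk
    refine Continuous.prodMk ?_ continuous_subtype_val.snd
    exact continuous_subtype_val.fst.div
      (Complex.continuous_ofReal.comp (continuous_const.add continuous_subtype_val.fst.norm))
      (fun p => den_ne _)
  continuous_invFun := by
    apply Continuous.subtype_mk
    refine Continuous.prodMk ?_ continuous_subtype_val.snd
    refine continuous_subtype_val.fst.div
      (Complex.continuous_ofReal.comp (continuous_const.sub continuous_subtype_val.fst.norm))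
      (fun p => ?_)
    obtain ⟨h1, _, _⟩ := (mem_Sset_iff _).mp p.2
    exact Complex.ofReal_ne_zero.mpr (by linarith)

noncomputable def eIso : ℂ ≃ₗᵢ[ℝ] EuclideanSpace ℝ (Fin 2) :=
  Complex.orthonormalBasisOneI.repr

noncomputable def homeo4 : ↥Sset ≃ₜ ↥solidTorusMinusCore where
  toFun p := ⟨(eIso p.1.1, eIso p.1.2), by
    obtain ⟨h1, h2, h3⟩ := (mem_Sset_iff _).mp p.2
    refine (mem_STMC_iff _).mpr ⟨by simpa [eIso.norm_map] using h1,
      by simpa [eIso.norm_map] using h2, fun h => h3 ?_⟩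
    simpa using congrArg eIso.symm h⟩
  invFun p := ⟨(eIso.symm p.1.1, eIso.symm p.1.2), by
    obtain ⟨h1, h2, h3⟩ := (mem_STMC_iff _).mp p.2
    refine (mem_Sset_iff _).mpr ⟨by simpa [eIso.symm.norm_map] using h1,
      by simpa [eIso.symm.norm_map] using h2, fun h => h3 ?_⟩
    simpa using congrArg eIso h⟩
  left_inv p := by
    apply Subtype.ext
    apply Prod.ext <;> simp
  right_inv p := by
    apply Subtype.ext
    apply Prod.ext <;> simp
  continuous_toFun := by
    apply Continuous.subtype_mk
    exact (eIso.continuous.comp continuous_subtype_val.fst).prodMk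
      (eIso.continuous.comp continuous_subtype_val.snd)
  continuous_invFun := by
    apply Continuous.subtype_mk
    exact (eIso.symm.continuous.comp continuous_subtype_val.fst).prodMk
      (eIso.symm.continuous.comp continuous_subtype_val.snd)

/-- `𝕄(3)` is homeomorphic to the open solid torus minus its core circle,
`(𝔹² × S¹) ∖ ({0} × S¹)`. -/
theorem Mset3_homeomorph_solidTorusMinusCore :
    Nonempty (↥Mset3 ≃ₜ ↥solidTorusMinusCore) := by
  exact ⟨homeo1.trans (homeo2.trans (homeo3.trans homeo4))⟩
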